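/- Let F be a field and v₁,v₂,v₃,v₄ ∈ F² vectors any two of which are linearly independent. Set r := (Δ(v₁,v₃)·Δ(v₂,v₄)) / (Δ(v₁,v₄)·Δ(v₂,v₃)). Then r ∉ {0,1}, and in the second exterior power ⋀²_ℚ (Fˣ_ℚ) one has (1−r) ∧ r = (1/2) · ∑_{σ ∈ S₄} sgn(σ) · Δ(v_{σ(1)},v_{σ(2)}) ∧ Δ(v_{σ(1)},v_{σ(3)}). -/
import Mathlib


open TensorProduct Matrix

noncomputable section

/-- `Fˣ_ℚ`: the ℚ-vector space `Fˣ ⊗_ℤ ℚ`, the multiplicative group `Fˣ`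
being regarded as a ℤ-module written additively. -/
abbrev UnitsQ (F : Type*) [Field F] : Type _ := ℚ ⊗[ℤ] Additive Fˣ

/-- The image of a nonzero element `a ∈ Fˣ` in `Fˣ_ℚ` (zero goes to `0`). -/
def toUnitsQ {F : Type*} [Field F] (a : F) : UnitsQ F :=
  letI := Classical.decEq F
  if h : a = 0 then 0 else (1 : ℚ) ⊗ₜ[ℤ] Additive.ofMul (Units.mk0 a h)

/-- The generator `a ∈ Fˣ_ℚ` viewed in the exterior algebra `⋀_ℚ (Fˣ_ℚ)`;
products of such elements are the wedge products. -/
def wedgeGen {F : Type*} [Field F] (a : F) : ExteriorAlgebra ℚ (UnitsQ F) :=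
  ExteriorAlgebra.ι ℚ (toUnitsQ a)

/-- `det2 x y` is the determinant of the 2×2 matrix whose columns are `x`, `y`. -/
def det2 {F : Type*} [Field F] (x y : Fin 2 → F) : F :=
  Matrix.det ((Matrix.of ![x, y])ᵀ)

section aux

variable {F : Type*} [Field F]

lemma tmul_torsion (u : Fˣ) (hu : u * u = 1) :
    ((1 : ℚ) ⊗ₜ[ℤ] Additive.ofMul u : UnitsQ F) = 0 := by
  have h2 : (2 : ℤ) • (Additive.ofMul u) = 0 := by
    rw [two_zsmul, ← ofMul_mul, hu]; rfl
  have : ((1 : ℚ) ⊗ₜ[ℤ] Additive.ofMul u : UnitsQ F) =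
      (2 : ℤ) • ((1/2 : ℚ) ⊗ₜ[ℤ] Additive.ofMul u) := by
    rw [smul_tmul', zsmul_eq_mul]
    norm_num
  rw [this, ← TensorProduct.tmul_smul, h2, tmul_zero]

lemma toUnitsQ_mul {a b : F} (ha : a ≠ 0) (hb : b ≠ 0) :
    toUnitsQ (a * b) = toUnitsQ a + toUnitsQ b := by
  rw [toUnitsQ, toUnitsQ, toUnitsQ, dif_neg (mul_ne_zero ha hb), dif_neg ha, dif_neg hb]
  rw [show Units.mk0 (a * b) (mul_ne_zero ha hb) = Units.mk0 a ha * Units.mk0 b hb from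
    Units.ext rfl, ofMul_mul, tmul_add]

lemma toUnitsQ_neg (a : F) : toUnitsQ (-a) = toUnitsQ a := by
  rcases eq_or_ne a 0 with rfl | ha
  · rw [neg_zero]
  · rw [toUnitsQ, toUnitsQ, dif_neg (neg_ne_zero.mpr ha), dif_neg ha]
    rw [show Units.mk0 (-a) (neg_ne_zero.mpr ha) = (-1 : Fˣ) * Units.mk0 a ha from
      Units.ext (by simp), ofMul_mul, tmul_add, tmul_torsion (-1 : Fˣ) (by simp), zero_add]

lemma toUnitsQ_inv {a : F} (ha : a ≠ 0) : toUnitsQ a⁻¹ = -toUnitsQ a := by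
  rw [toUnitsQ, toUnitsQ, dif_neg (inv_ne_zero ha), dif_neg ha]
  rw [show Units.mk0 a⁻¹ (inv_ne_zero ha) = (Units.mk0 a ha)⁻¹ from Units.ext rfl,
    ofMul_inv, tmul_neg]

lemma toUnitsQ_div {a b : F} (ha : a ≠ 0) (hb : b ≠ 0) :
    toUnitsQ (a / b) = toUnitsQ a - toUnitsQ b := by
  rw [div_eq_mul_inv, toUnitsQ_mul ha (inv_ne_zero hb), toUnitsQ_inv hb, sub_eq_add_neg]

lemma det2_apply (x y : Fin 2 → F) : det2 x y = x 0 * y 1 - x 1 * y 0 := by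
  rw [det2, Matrix.det_transpose, Matrix.det_fin_two]
  simp

lemma det2_antisymm (x y : Fin 2 → F) : det2 y x = -det2 x y := by
  simp only [det2_apply]; ring

lemma wedgeGen_det2_symm (x y : Fin 2 → F) : wedgeGen (det2 y x) = wedgeGen (det2 x y) := by
  rw [wedgeGen, wedgeGen, det2_antisymm, toUnitsQ_neg]

end aux

def pp (a b c d a' b' c' d' : Fin 4)
    (h1 : Function.LeftInverse ![a', b', c', d'] ![a, b, c, d] := by decide)
    (h2 : Function.RightInverse ![a', b', c', d'] ![a, b, c, d] := by decide) :
    Equiv.Perm (Fin 4) :=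
  ⟨![a, b, c, d], ![a', b', c', d'], h1, h2⟩

lemma pp_apply (a b c d a' b' c' d' : Fin 4) (h1 h2) (x : Fin 4) :
    pp a b c d a' b' c' d' h1 h2 x = ![a, b, c, d] x := rfl

def ee : Fin 24 → Equiv.Perm (Fin 4) :=
  ![pp 0 1 2 3 0 1 2 3,
    pp 0 1 3 2 0 1 3 2,
    pp 0 2 1 3 0 2 1 3,
    pp 0 2 3 1 0 3 1 2,
    pp 0 3 1 2 0 2 3 1,
    pp 0 3 2 1 0 3 2 1,
    pp 1 0 2 3 1 0 2 3,
    pp 1 0 3 2 1 0 3 2,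
    pp 1 2 0 3 2 0 1 3,
    pp 1 2 3 0 3 0 1 2,
    pp 1 3 0 2 2 0 3 1,
    pp 1 3 2 0 3 0 2 1,
    pp 2 0 1 3 1 2 0 3,
    pp 2 0 3 1 1 3 0 2,
    pp 2 1 0 3 2 1 0 3,
    pp 2 1 3 0 3 1 0 2,
    pp 2 3 0 1 2 3 0 1,
    pp 2 3 1 0 3 2 0 1,
    pp 3 0 1 2 1 2 3 0,
    pp 3 0 2 1 1 3 2 0,
    pp 3 1 0 2 2 1 3 0,
    pp 3 1 2 0 3 1 2 0,
    pp 3 2 0 1 2 3 1 0,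
    pp 3 2 1 0 3 2 1 0]

set_option maxHeartbeats 2000000 in
lemma sum24 {A : Type*} [AddCommGroup A] [Mul A] (W : Fin 4 → Fin 4 → A) :
    ∑ σ : Equiv.Perm (Fin 4), (Equiv.Perm.sign σ : ℤ) •
      (W (σ 0) (σ 1) * W (σ 0) (σ 2)) =
    W 0 1 * W 0 2 - W 0 1 * W 0 3 - W 0 2 * W 0 1 + W 0 2 * W 0 3 + W 0 3 * W 0 1 - W 0 3 * W 0 2 - W 1 0 * W 1 2 + W 1 0 * W 1 3 + W 1 2 * W 1 0 - W 1 2 * W 1 3 - W 1 3 * W 1 0 + W 1 3 * W 1 2 + W 2 0 * W 2 1 - W 2 0 * W 2 3 - W 2 1 * W 2 0 + W 2 1 * W 2 3 + W 2 3 * W 2 0 - W 2 3 * W 2 1 - W 3 0 * W 3 1 + W 3 0 * W 3 2 + W 3 1 * W 3 0 - W 3 1 * W 3 2 - W 3 2 * W 3 0 + W 3 2 * W 3 1 := by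
  have hb : Function.Bijective ee := by decide
  have step : ∑ σ : Equiv.Perm (Fin 4), (Equiv.Perm.sign σ : ℤ) •
      (W (σ 0) (σ 1) * W (σ 0) (σ 2)) =
      ∑ i : Fin 24, (Equiv.Perm.sign (ee i) : ℤ) •
      (W (ee i 0) (ee i 1) * W (ee i 0) (ee i 2)) :=
    (Fintype.sum_bijective ee hb _ _ (fun _ => rfl)).symm
  rw [step]
  simp only [Fin.sum_univ_succ, Fin.sum_univ_zero, ee, Matrix.cons_val_zero,
    Matrix.cons_val_succ, add_zero]
  have hg0 : Equiv.Perm.sign (pp 0 1 2 3 0 1 2 3) = 1 := by decide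
  have hg1 : Equiv.Perm.sign (pp 0 1 3 2 0 1 3 2) = -1 := by decide
  have hg2 : Equiv.Perm.sign (pp 0 2 1 3 0 2 1 3) = -1 := by decide
  have hg3 : Equiv.Perm.sign (pp 0 2 3 1 0 3 1 2) = 1 := by decide
  have hg4 : Equiv.Perm.sign (pp 0 3 1 2 0 2 3 1) = 1 := by decide
  have hg5 : Equiv.Perm.sign (pp 0 3 2 1 0 3 2 1) = -1 := by decide
  have hg6 : Equiv.Perm.sign (pp 1 0 2 3 1 0 2 3) = -1 := by decide
  have hg7 : Equiv.Perm.sign (pp 1 0 3 2 1 0 3 2) = 1 := by decide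
  have hg8 : Equiv.Perm.sign (pp 1 2 0 3 2 0 1 3) = 1 := by decide
  have hg9 : Equiv.Perm.sign (pp 1 2 3 0 3 0 1 2) = -1 := by decide
  have hg10 : Equiv.Perm.sign (pp 1 3 0 2 2 0 3 1) = -1 := by decide
  have hg11 : Equiv.Perm.sign (pp 1 3 2 0 3 0 2 1) = 1 := by decide
  have hg12 : Equiv.Perm.sign (pp 2 0 1 3 1 2 0 3) = 1 := by decide
  have hg13 : Equiv.Perm.sign (pp 2 0 3 1 1 3 0 2) = -1 := by decide
  have hg14 : Equiv.Perm.sign (pp 2 1 0 3 2 1 0 3) = -1 := by decide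
  have hg15 : Equiv.Perm.sign (pp 2 1 3 0 3 1 0 2) = 1 := by decide
  have hg16 : Equiv.Perm.sign (pp 2 3 0 1 2 3 0 1) = 1 := by decide
  have hg17 : Equiv.Perm.sign (pp 2 3 1 0 3 2 0 1) = -1 := by decide
  have hg18 : Equiv.Perm.sign (pp 3 0 1 2 1 2 3 0) = -1 := by decide
  have hg19 : Equiv.Perm.sign (pp 3 0 2 1 1 3 2 0) = 1 := by decide
  have hg20 : Equiv.Perm.sign (pp 3 1 0 2 2 1 3 0) = 1 := by decide
  have hg21 : Equiv.Perm.sign (pp 3 1 2 0 3 1 2 0) = -1 := by decide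
  have hg22 : Equiv.Perm.sign (pp 3 2 0 1 2 3 1 0) = -1 := by decide
  have hg23 : Equiv.Perm.sign (pp 3 2 1 0 3 2 1 0) = 1 := by decide
  simp only [pp_apply, Matrix.cons_val_zero,
    Matrix.cons_val_one, Matrix.head_cons, Matrix.cons_val_two, Matrix.tail_cons,
    hg0, hg1, hg2, hg3, hg4, hg5, hg6, hg7, hg8, hg9, hg10, hg11, hg12, hg13, hg14, hg15,
    hg16, hg17, hg18, hg19, hg20, hg21, hg22, hg23,
    Units.val_one, Units.val_neg, one_smul, neg_smul]
  abel

lemma key_wedge {M : Type*} [AddCommGroup M] [Module ℚ M] (a b c d e f : M) :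
    ExteriorAlgebra.ι ℚ (a + f - (c + d)) * ExteriorAlgebra.ι ℚ (b + e - (c + d)) =
    (1 / 2 : ℚ) • (ExteriorAlgebra.ι ℚ a * ExteriorAlgebra.ι ℚ b - ExteriorAlgebra.ι ℚ a * ExteriorAlgebra.ι ℚ c - ExteriorAlgebra.ι ℚ b * ExteriorAlgebra.ι ℚ a + ExteriorAlgebra.ι ℚ b * ExteriorAlgebra.ι ℚ c + ExteriorAlgebra.ι ℚ c * ExteriorAlgebra.ι ℚ a - ExteriorAlgebra.ι ℚ c * ExteriorAlgebra.ι ℚ b - ExteriorAlgebra.ι ℚ a * ExteriorAlgebra.ι ℚ d + ExteriorAlgebra.ι ℚ a * ExteriorAlgebra.ι ℚ e + ExteriorAlgebra.ι ℚ d * ExteriorAlgebra.ι ℚ a - ExteriorAlgebra.ι ℚ d * ExteriorAlgebra.ι ℚ e - ExteriorAlgebra.ι ℚ e * ExteriorAlgebra.ι ℚ a + ExteriorAlgebra.ι ℚ e * ExteriorAlgebra.ι ℚ d + ExteriorAlgebra.ι ℚ b * ExteriorAlgebra.ι ℚ d - ExteriorAlgebra.ι ℚ b * ExteriorAlgebra.ι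 ℚ f - ExteriorAlgebra.ι ℚ d * ExteriorAlgebra.ι ℚ b + ExteriorAlgebra.ι ℚ d * ExteriorAlgebra.ι ℚ f + ExteriorAlgebra.ι ℚ f * ExteriorAlgebra.ι ℚ b - ExteriorAlgebra.ι ℚ f * ExteriorAlgebra.ι ℚ d - ExteriorAlgebra.ι ℚ c * ExteriorAlgebra.ι ℚ e + ExteriorAlgebra.ι ℚ c * ExteriorAlgebra.ι ℚ f + ExteriorAlgebra.ι ℚ e * ExteriorAlgebra.ι ℚ c - ExteriorAlgebra.ι ℚ e * ExteriorAlgebra.ι ℚ f - ExteriorAlgebra.ι ℚ f * ExteriorAlgebra.ι ℚ c + ExteriorAlgebra.ι ℚ f * ExteriorAlgebra.ι ℚ e) := by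
  have sw : ∀ x y : M, ExteriorAlgebra.ι ℚ x * ExteriorAlgebra.ι ℚ y =
      -(ExteriorAlgebra.ι ℚ y * ExteriorAlgebra.ι ℚ x) := fun x y =>
    eq_neg_of_add_eq_zero_left (ExteriorAlgebra.ι_add_mul_swap x y)
  simp only [map_add, map_sub, add_mul, mul_add, sub_mul, mul_sub]
  simp only [sw b a, sw c a, sw c b, sw d a, sw d b, sw d c, sw e a, sw e b, sw e c, sw e d, sw f a, sw f b, sw f c, sw f d, sw f e, ExteriorAlgebra.ι_sq_zero]
  module

set_option maxHeartbeats 4000000 in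
/-- **Formula (su1)**: for `v₁,v₂,v₃,v₄ ∈ F²` pairwise linearly independent, the
cross-ratio `r = Δ(v₁,v₃)Δ(v₂,v₄)/(Δ(v₁,v₄)Δ(v₂,v₃))` satisfies `r ∉ {0,1}` and
`(1−r) ∧ r = ½ · Alt₄ {Δ(v₁,v₂) ∧ Δ(v₁,v₃)}` in `⋀² Fˣ_ℚ`. -/
theorem crossRatio_delta2_formula {F : Type*} [Field F] (v : Fin 4 → (Fin 2 → F))
    (hv : ∀ i j : Fin 4, i ≠ j → LinearIndependent F ![v i, v j]) :
    (det2 (v 0) (v 2) * det2 (v 1) (v 3)) / (det2 (v 0) (v 3) * det2 (v 1) (v 2)) ≠ 0 ∧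
    (det2 (v 0) (v 2) * det2 (v 1) (v 3)) / (det2 (v 0) (v 3) * det2 (v 1) (v 2)) ≠ 1 ∧
    wedgeGen (1 - (det2 (v 0) (v 2) * det2 (v 1) (v 3)) /
        (det2 (v 0) (v 3) * det2 (v 1) (v 2))) *
      wedgeGen ((det2 (v 0) (v 2) * det2 (v 1) (v 3)) /
        (det2 (v 0) (v 3) * det2 (v 1) (v 2))) =
    (1 / 2 : ℚ) • ∑ σ : Equiv.Perm (Fin 4), (Equiv.Perm.sign σ : ℤ) •
      (wedgeGen (det2 (v (σ 0)) (v (σ 1))) * wedgeGen (det2 (v (σ 0)) (v (σ 2)))) := by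
  have hΔ : ∀ i j : Fin 4, i ≠ j → det2 (v i) (v j) ≠ 0 := by
    intro i j hij
    rw [det2, Matrix.det_transpose]
    exact ((Matrix.isUnit_iff_isUnit_det _).mp
      (Matrix.linearIndependent_rows_iff_isUnit.mp (hv i j hij))).ne_zero
  have h01 := hΔ 0 1 (by decide)
  have h02 := hΔ 0 2 (by decide)
  have h03 := hΔ 0 3 (by decide)
  have h12 := hΔ 1 2 (by decide)
  have h13 := hΔ 1 3 (by decide)
  have h23 := hΔ 2 3 (by decide)
  have key : det2 (v 0) (v 1) * det2 (v 2) (v 3) - det2 (v 0) (v 2) * det2 (v 1) (v 3) +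
      det2 (v 0) (v 3) * det2 (v 1) (v 2) = 0 := by
    simp only [det2_apply]; ring
  refine ⟨div_ne_zero (mul_ne_zero h02 h13) (mul_ne_zero h03 h12), ?_, ?_⟩
  · intro h
    rw [div_eq_one_iff_eq (mul_ne_zero h03 h12)] at h
    exact (mul_ne_zero h01 h23) (by linear_combination key + h)
  · have hval : (1 : F) - (det2 (v 0) (v 2) * det2 (v 1) (v 3)) /
        (det2 (v 0) (v 3) * det2 (v 1) (v 2)) =
        -(det2 (v 0) (v 1) * det2 (v 2) (v 3)) /
        (det2 (v 0) (v 3) * det2 (v 1) (v 2)) := by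
      field_simp
      linear_combination key
    have hu1 : toUnitsQ (1 - (det2 (v 0) (v 2) * det2 (v 1) (v 3)) /
        (det2 (v 0) (v 3) * det2 (v 1) (v 2))) =
        toUnitsQ (det2 (v 0) (v 1)) + toUnitsQ (det2 (v 2) (v 3)) -
        (toUnitsQ (det2 (v 0) (v 3)) + toUnitsQ (det2 (v 1) (v 2))) := by
      rw [hval, toUnitsQ_div (neg_ne_zero.mpr (mul_ne_zero h01 h23)) (mul_ne_zero h03 h12),
        toUnitsQ_neg, toUnitsQ_mul h01 h23, toUnitsQ_mul h03 h12]
    have hu2 : toUnitsQ ((det2 (v 0) (v 2) * det2 (v 1) (v 3)) /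
        (det2 (v 0) (v 3) * det2 (v 1) (v 2))) =
        toUnitsQ (det2 (v 0) (v 2)) + toUnitsQ (det2 (v 1) (v 3)) -
        (toUnitsQ (det2 (v 0) (v 3)) + toUnitsQ (det2 (v 1) (v 2))) := by
      rw [toUnitsQ_div (mul_ne_zero h02 h13) (mul_ne_zero h03 h12),
        toUnitsQ_mul h02 h13, toUnitsQ_mul h03 h12]
    have hsum : (∑ σ : Equiv.Perm (Fin 4), (Equiv.Perm.sign σ : ℤ) •
        (wedgeGen (det2 (v (σ 0)) (v (σ 1))) * wedgeGen (det2 (v (σ 0)) (v (σ 2))))) =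
        wedgeGen (det2 (v 0) (v 1)) * wedgeGen (det2 (v 0) (v 2)) - wedgeGen (det2 (v 0) (v 1)) * wedgeGen (det2 (v 0) (v 3)) - wedgeGen (det2 (v 0) (v 2)) * wedgeGen (det2 (v 0) (v 1)) + wedgeGen (det2 (v 0) (v 2)) * wedgeGen (det2 (v 0) (v 3)) + wedgeGen (det2 (v 0) (v 3)) * wedgeGen (det2 (v 0) (v 1)) - wedgeGen (det2 (v 0) (v 3)) * wedgeGen (det2 (v 0) (v 2)) - wedgeGen (det2 (v 1) (v 0)) * wedgeGen (det2 (v 1) (v 2)) + wedgeGen (det2 (v 1) (v 0)) * wedgeGen (det2 (v 1) (v 3)) + wedgeGen (det2 (v 1) (v 2)) * wedgeGen (det2 (v 1) (v 0)) - wedgeGen (det2 (v 1) (v 2)) * wedgeGen (det2 (v 1) (v 3)) - wedgeGen (det2 (v 1) (v 3)) * wedgeGen (det2 (v 1) (v 0)) + wedgeGen (det2 (v 1) (v 3)) * wedgeGen (det2 (v 1) (v 2)) + wedgeGen (det2 (v 2) (v 0)) * wedgeGen (det2 (v 2) (v 1)) - wedgeGen (det2 (v 2) (v 0)) * wedgeGen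 (det2 (v 2) (v 3)) - wedgeGen (det2 (v 2) (v 1)) * wedgeGen (det2 (v 2) (v 0)) + wedgeGen (det2 (v 2) (v 1)) * wedgeGen (det2 (v 2) (v 3)) + wedgeGen (det2 (v 2) (v 3)) * wedgeGen (det2 (v 2) (v 0)) - wedgeGen (det2 (v 2) (v 3)) * wedgeGen (det2 (v 2) (v 1)) - wedgeGen (det2 (v 3) (v 0)) * wedgeGen (det2 (v 3) (v 1)) + wedgeGen (det2 (v 3) (v 0)) * wedgeGen (det2 (v 3) (v 2)) + wedgeGen (det2 (v 3) (v 1)) * wedgeGen (det2 (v 3) (v 0)) - wedgeGen (det2 (v 3) (v 1)) * wedgeGen (det2 (v 3) (v 2)) - wedgeGen (det2 (v 3) (v 2)) * wedgeGen (det2 (v 3) (v 0)) + wedgeGen (det2 (v 3) (v 2)) * wedgeGen (det2 (v 3) (v 1))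
 :=
      sum24 fun i j => wedgeGen (det2 (v i) (v j))
    rw [hsum]
    simp only [wedgeGen_det2_symm (v 0) (v 1), wedgeGen_det2_symm (v 0) (v 2),
      wedgeGen_det2_symm (v 0) (v 3), wedgeGen_det2_symm (v 1) (v 2),
      wedgeGen_det2_symm (v 1) (v 3), wedgeGen_det2_symm (v 2) (v 3)]
    simp only [wedgeGen]
    rw [hu1, hu2]
    exact key_wedge (toUnitsQ (det2 (v 0) (v 1))) (toUnitsQ (det2 (v 0) (v 2)))
      (toUnitsQ (det2 (v 0) (v 3))) (toUnitsQ (det2 (v 1) (v 2)))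
      (toUnitsQ (det2 (v 1) (v 3))) (toUnitsQ (det2 (v 2) (v 3)))
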